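/- (1) If an L-formula φ is falsifiable (respectively, satisfiable) on a shallow CS4 frame, then φ is falsifiable (respectively, satisfiable) on a finite CS4 frame. (2) If φ is falsifiable (respectively, satisfiable) on a shallow, forest-like S4I frame, then φ is falsifiable (respectively, satisfiable) on a finite S4I frame. -/

import Mathlib

universe u

/-- Formulas of the intuitionistic modal language `L`, with a countably infinite
set of propositional variables indexed by `ℕ`. -/
inductive Fml : Type where
  | var : ℕ → Fml
  | bot : Fml
  | and : Fml → Fml → Fml
  | or : Fml → Fml → Fml
  | imp : Fml → Fml → Fml
  | dia : Fml → Fml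
  | box : Fml → Fml
  deriving DecidableEq

/-- A birelational structure: a set of worlds, a set of fallible worlds, an
intuitionistic relation `le` (`≼`), a modal relation `sq` (`⊑`) and a valuation. -/
structure KModel : Type (u + 1) where
  W : Type u
  fallible : Set W
  le : W → W → Prop
  sq : W → W → Prop
  val : ℕ → Set W

namespace KModel

/-- The satisfaction relation. -/
def Sat (M : KModel.{u}) : Fml → M.W → Prop
  | .var p, w => w ∈ M.val p
  | .bot, w => w ∈ M.fallible
  | .and φ ψ, w => Sat M φ w ∧ Sat M ψ w
  | .or φ ψ, w => Sat M φ w ∨ Sat M ψ w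
  | .imp φ ψ, w => ∀ v, M.le w v → Sat M φ v → Sat M ψ v
  | .dia φ, w => ∀ u, M.le w u → ∃ v, M.sq u v ∧ Sat M φ v
  | .box φ, w => ∀ u v, M.le w u → M.sq u v → Sat M φ v

/-- `M` is a bi-intuitionistic model: both relations are preorders, the set of
fallible worlds is closed under both relations, and the valuation is
`≼`-monotone and contains the fallible worlds. -/
def IsBiInt (M : KModel.{u}) : Prop :=
  (∀ w, M.le w w) ∧ (∀ u v w, M.le u v → M.le v w → M.le u w) ∧
  (∀ w, M.sq w w) ∧ (∀ u v w, M.sq u v → M.sq v w → M.sq u w) ∧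
  (∀ w v, w ∈ M.fallible → M.le w v → v ∈ M.fallible) ∧
  (∀ w v, w ∈ M.fallible → M.sq w v → v ∈ M.fallible) ∧
  (∀ p w v, w ∈ M.val p → M.le w v → v ∈ M.val p) ∧
  (∀ p w, w ∈ M.fallible → w ∈ M.val p)

/-- `⊑` is forth–up confluent for `≼`. -/
def ForthUp (M : KModel.{u}) : Prop :=
  ∀ w w' v, M.le w w' → M.sq w v → ∃ v', M.le v v' ∧ M.sq w' v'

/-- `⊑` is back–up confluent for `≼`. -/
def BackUp (M : KModel.{u}) : Prop :=
  ∀ w v v', M.sq w v → M.le v v' → ∃ w', M.le w w' ∧ M.sq w' v'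

/-- `⊑` is forth–down confluent for `≼`. -/
def ForthDown (M : KModel.{u}) : Prop :=
  ∀ w v v', M.le w v → M.sq v v' → ∃ w', M.sq w w' ∧ M.le w' v'

/-- `≼` is upward linear. -/
def UpLinear (M : KModel.{u}) : Prop :=
  ∀ w u v, M.le w u → M.le w v → M.le u v ∨ M.le v u

/-- There are no fallible worlds. -/
def Infallible (M : KModel.{u}) : Prop := M.fallible = ∅

/-- CS4 frames: back–up confluent bi-intuitionistic frames. -/
def IsCS4 (M : KModel.{u}) : Prop := M.IsBiInt ∧ M.BackUp

/-- IS4 frames: forth–up confluent infallible CS4 frames. -/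
def IsIS4 (M : KModel.{u}) : Prop := M.IsCS4 ∧ M.ForthUp ∧ M.Infallible

/-- GS4 frames: upward-linear IS4 frames. -/
def IsGS4 (M : KModel.{u}) : Prop := M.IsIS4 ∧ M.UpLinear

/-- GS4c frames: forth–down confluent GS4 frames. -/
def IsGS4c (M : KModel.{u}) : Prop := M.IsGS4 ∧ M.ForthDown

/-- S4I frames: forth–up and forth–down confluent infallible bi-intuitionistic frames. -/
def IsS4I (M : KModel.{u}) : Prop :=
  M.IsBiInt ∧ M.ForthUp ∧ M.ForthDown ∧ M.Infallible

end KModel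

namespace KModel

/-- The strict order `w ≺ v`: `w ≼ v` but not `v ≼ w`. -/
def Slt (M : KModel.{u}) (w v : M.W) : Prop := M.le w v ∧ ¬ M.le v w

/-- The model has depth at most `n`: every chain `w₀ ≺ w₁ ≺ … ≺ w_m` has `m ≤ n`. -/
def DepthLE (M : KModel.{u}) (n : ℕ) : Prop :=
  ∀ (m : ℕ) (c : ℕ → M.W), (∀ i < m, M.Slt (c i) (c (i + 1))) → m ≤ n

/-- The model is shallow: its depth is finite. -/
def Shallow (M : KModel.{u}) : Prop := ∃ n : ℕ, M.DepthLE n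

/-- `≼` is downward linear. -/
def DownLinear (M : KModel.{u}) : Prop :=
  ∀ w u v, M.le u w → M.le v w → M.le u v ∨ M.le v u

/-- The model is forest-like: the set of `≼`-predecessors of any world is
totally ordered by `≼`. -/
def ForestLike (M : KModel.{u}) : Prop :=
  ∀ w u v, M.le u w → M.le v w → M.le u v ∨ M.le v u

end KModel

/-!
CS4: filtration through the subformulas of `φ`. A world of the finite model is the theory of a
world of `M` together with a finite set of formulas promised to hold at `⊑`-successors; `≼`
compares theories, while `⊑` propagates boxes and falsity and shrinks the promises. Since promises
can be enlarged at will, back–up confluence holds.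

S4I: in a forest-like frame of depth `n` the worlds below any `w` form a chain of at most `n + 1`
clusters. Identify two worlds when they have the same theory, the same rank, and clusters below
them of the same `≼`-bisimulation types, computed to finite height so that there are finitely many.
This identification is a `≼`-bisimulation in both directions, so the quotient, whose `⊑` is the
transitive closure of the image of `⊑`, inherits forth–up confluence from the forward zig,
forth–down confluence from the backward zig, and the truth values of subformulas of `φ`.
-/

namespace Fml

def subformulas : Fml → Finset Fml
  | var p => {var p}
  | bot => {bot}
  | and a b => insert (and a b) (a.subformulas ∪ b.subformulas)
  | or a b => insert (or a b) (a.subformulas ∪ b.subformulas)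
  | imp a b => insert (imp a b) (a.subformulas ∪ b.subformulas)
  | dia a => insert (dia a) a.subformulas
  | box a => insert (box a) a.subformulas

theorem mem_subformulas_self (φ : Fml) : φ ∈ φ.subformulas := by
  cases φ <;> simp [subformulas]

theorem subformulas_subset {φ ψ : Fml} (h : ψ ∈ φ.subformulas) :
    ψ.subformulas ⊆ φ.subformulas := by
  induction φ with
  | var | bot => simp_all [subformulas]
  | and a b iha ihb | or a b iha ihb | imp a b iha ihb =>
    simp only [subformulas, Finset.mem_insert, Finset.mem_union] at h
    rcases h with rfl | h | h
    · rfl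
    · exact (iha h).trans (Finset.subset_union_left.trans (Finset.subset_insert _ _))
    · exact (ihb h).trans (Finset.subset_union_right.trans (Finset.subset_insert _ _))
  | dia a ih | box a ih =>
    simp only [subformulas, Finset.mem_insert] at h
    rcases h with rfl | h
    · rfl
    · exact (ih h).trans (Finset.subset_insert _ _)

variable {φ a b : Fml}

theorem mem_subformulas_of_and (h : and a b ∈ φ.subformulas) :
    a ∈ φ.subformulas ∧ b ∈ φ.subformulas :=
  ⟨subformulas_subset h (by simp [subformulas, mem_subformulas_self]),
    subformulas_subset h (by simp [subformulas, mem_subformulas_self])⟩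

theorem mem_subformulas_of_or (h : or a b ∈ φ.subformulas) :
    a ∈ φ.subformulas ∧ b ∈ φ.subformulas :=
  ⟨subformulas_subset h (by simp [subformulas, mem_subformulas_self]),
    subformulas_subset h (by simp [subformulas, mem_subformulas_self])⟩

theorem mem_subformulas_of_imp (h : imp a b ∈ φ.subformulas) :
    a ∈ φ.subformulas ∧ b ∈ φ.subformulas :=
  ⟨subformulas_subset h (by simp [subformulas, mem_subformulas_self]),
    subformulas_subset h (by simp [subformulas, mem_subformulas_self])⟩

theorem mem_subformulas_of_dia (h : dia a ∈ φ.subformulas) : a ∈ φ.subformulas :=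
  subformulas_subset h (by simp [subformulas, mem_subformulas_self])

theorem mem_subformulas_of_box (h : box a ∈ φ.subformulas) : a ∈ φ.subformulas :=
  subformulas_subset h (by simp [subformulas, mem_subformulas_self])

end Fml

namespace KModel

variable {M : KModel.{u}}

namespace IsBiInt

variable (hM : M.IsBiInt)
include hM

theorem le_refl (w : M.W) : M.le w w := hM.1 w

theorem le_trans {u v w : M.W} (huv : M.le u v) (hvw : M.le v w) : M.le u w :=
  hM.2.1 u v w huv hvw

theorem sq_refl (w : M.W) : M.sq w w := hM.2.2.1 w

theorem sq_trans {u v w : M.W} (huv : M.sq u v) (hvw : M.sq v w) : M.sq u w :=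
  hM.2.2.2.1 u v w huv hvw

theorem fallible_of_le {w v : M.W} (hw : w ∈ M.fallible) (hwv : M.le w v) : v ∈ M.fallible :=
  hM.2.2.2.2.1 w v hw hwv

theorem fallible_of_sq {w v : M.W} (hw : w ∈ M.fallible) (hwv : M.sq w v) : v ∈ M.fallible :=
  hM.2.2.2.2.2.1 w v hw hwv

theorem val_of_le {p : ℕ} {w v : M.W} (hw : w ∈ M.val p) (hwv : M.le w v) : v ∈ M.val p :=
  hM.2.2.2.2.2.2.1 p w v hw hwv

theorem val_of_fallible (p : ℕ) {w : M.W} (hw : w ∈ M.fallible) : w ∈ M.val p :=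
  hM.2.2.2.2.2.2.2 p w hw

end IsBiInt

theorem Sat.mono (hM : M.IsBiInt) {ψ : Fml} {w v : M.W} (hwv : M.le w v) (h : M.Sat ψ w) :
    M.Sat ψ v := by
  induction ψ generalizing w v with
  | var p => exact hM.val_of_le h hwv
  | bot => exact hM.fallible_of_le h hwv
  | and a b iha ihb => exact ⟨iha hwv h.1, ihb hwv h.2⟩
  | or a b iha ihb => exact h.imp (iha hwv) (ihb hwv)
  | imp a b => exact fun x hx => h x (hM.le_trans hwv hx)
  | dia a => exact fun x hx => h x (hM.le_trans hwv hx)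
  | box a => exact fun x y hx => h x y (hM.le_trans hwv hx)

variable (M) in
open scoped Classical in
noncomputable def theory (φ : Fml) (w : M.W) : Finset Fml :=
  φ.subformulas.filter (M.Sat · w)

open scoped Classical in
theorem mem_theory {φ ψ : Fml} {w : M.W} :
    ψ ∈ M.theory φ w ↔ ψ ∈ φ.subformulas ∧ M.Sat ψ w :=
  Finset.mem_filter

open scoped Classical in
theorem theory_subset (φ : Fml) (w : M.W) : M.theory φ w ⊆ φ.subformulas :=
  Finset.filter_subset _ _

theorem theory_mono (hM : M.IsBiInt) (φ : Fml) {w v : M.W} (hwv : M.le w v) :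
    M.theory φ w ⊆ M.theory φ v := fun _ hψ =>
  mem_theory.2 ⟨(mem_theory.1 hψ).1, (mem_theory.1 hψ).2.mono hM hwv⟩

theorem Sat.of_theory_eq {φ ψ : Fml} {w w' : M.W} (h : M.theory φ w = M.theory φ w')
    (hψ : ψ ∈ φ.subformulas) (hw : M.Sat ψ w) : M.Sat ψ w' :=
  (mem_theory.1 (h ▸ mem_theory.2 ⟨hψ, hw⟩)).2

theorem IsCS4.sat_box_of_sq (hM : M.IsCS4) {a : Fml} {u v : M.W} (huv : M.sq u v)
    (hu : M.Sat (.box a) u) : M.Sat (.box a) v := by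
  intro x y hvx hxy
  obtain ⟨u', huu', hu'x⟩ := hM.2 u v x huv hvx
  exact hu u' y huu' (hM.1.sq_trans hu'x hxy)

section CS4

variable (M) (φ : Fml)

open scoped Classical in
noncomputable def witnessed (w : M.W) : Finset Fml :=
  φ.subformulas.filter fun ψ => ∃ x, M.sq w x ∧ M.Sat ψ x

/-- A world is a pair `(t, X)`: `t` is the theory of some `w`, and the promises `X ⊆ sub φ`
include every formula holding at some `⊑`-successor of `w`. -/
noncomputable def cs4Model : KModel.{0} where
  W := {p : Finset Fml × Finset Fml //
    (∃ w, p.1 = M.theory φ w ∧ M.witnessed φ w ⊆ p.2) ∧ p.2 ⊆ φ.subformulas}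
  fallible := {f | .bot ∈ f.1.1}
  le f g := f.1.1 ⊆ g.1.1
  sq f g := (∀ a, .box a ∈ f.1.1 → .box a ∈ g.1.1) ∧ (.bot ∈ f.1.1 → .bot ∈ g.1.1) ∧
    g.1.2 ⊆ f.1.2
  val p := {f | .var p ∈ φ.subformulas → .var p ∈ f.1.1}

variable {M φ}

open scoped Classical in
theorem witnessed_subset (w : M.W) : M.witnessed φ w ⊆ φ.subformulas :=
  Finset.filter_subset _ _

variable (M φ) in
noncomputable def cs4Point (w : M.W) : (M.cs4Model φ).W :=
  ⟨(M.theory φ w, M.witnessed φ w), ⟨w, rfl, subset_rfl⟩, witnessed_subset w⟩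

open scoped Classical in
theorem mem_witnessed {ψ : Fml} {w : M.W} :
    ψ ∈ M.witnessed φ w ↔ ψ ∈ φ.subformulas ∧ ∃ x, M.sq w x ∧ M.Sat ψ x :=
  Finset.mem_filter

theorem witnessed_anti (hM : M.IsBiInt) {u v : M.W} (huv : M.sq u v) :
    M.witnessed φ v ⊆ M.witnessed φ u := fun _ hψ =>
  have ⟨hψ, x, hvx, hx⟩ := mem_witnessed.1 hψ
  mem_witnessed.2 ⟨hψ, x, hM.sq_trans huv hvx, hx⟩

theorem cs4Model.theory_subset_promises (hM : M.IsBiInt) (f : (M.cs4Model φ).W) :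
    f.1.1 ⊆ f.1.2 := by
  obtain ⟨⟨w, hw, hwX⟩, -⟩ := f.2
  intro ψ hψ
  rw [hw, mem_theory] at hψ
  exact hwX (mem_witnessed.2 ⟨hψ.1, w, hM.sq_refl w, hψ.2⟩)

theorem cs4Model.le_cs4Point (hM : M.IsBiInt) {f : (M.cs4Model φ).W} {w v : M.W}
    (hf : f.1.1 = M.theory φ w) (hwv : M.le w v) : (M.cs4Model φ).le f (M.cs4Point φ v) := by
  show f.1.1 ⊆ M.theory φ v
  exact hf ▸ theory_mono hM φ hwv

theorem cs4Model.sq_cs4Point (hM : M.IsCS4) {u v : M.W} (huv : M.sq u v)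
    {g : (M.cs4Model φ).W} (hg : g.1.1 = M.theory φ u) (hgX : M.witnessed φ u ⊆ g.1.2) :
    (M.cs4Model φ).sq g (M.cs4Point φ v) := by
  refine ⟨fun a ha => ?_, fun hb => ?_, (witnessed_anti hM.1 huv).trans hgX⟩
  · rw [hg, mem_theory] at ha
    exact mem_theory.2 ⟨ha.1, hM.sat_box_of_sq huv ha.2⟩
  · rw [hg, mem_theory] at hb
    exact mem_theory.2 ⟨hb.1, hM.1.fallible_of_sq hb.2 huv⟩

section TruthLemma

variable {a b : Fml}

theorem cs4Model.sat_imp_iff (hM : M.IsBiInt) (hψ : .imp a b ∈ φ.subformulas)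
    (iha : ∀ g, (M.cs4Model φ).Sat a g ↔ a ∈ g.1.1)
    (ihb : ∀ g, (M.cs4Model φ).Sat b g ↔ b ∈ g.1.1) (f : (M.cs4Model φ).W) :
    (M.cs4Model φ).Sat (.imp a b) f ↔ .imp a b ∈ f.1.1 := by
  obtain ⟨ha, hb⟩ := Fml.mem_subformulas_of_imp hψ
  constructor
  · intro h
    obtain ⟨⟨w, hw, -⟩, -⟩ := f.2
    refine hw ▸ mem_theory.2 ⟨hψ, fun v hwv hva => ?_⟩
    have hvb := h _ (cs4Model.le_cs4Point hM hw hwv) ((iha _).2 (mem_theory.2 ⟨ha, hva⟩))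
    exact (mem_theory.1 ((ihb _).1 hvb)).2
  · intro h g hfg hga
    obtain ⟨⟨v, hv, -⟩, -⟩ := g.2
    rw [iha, hv, mem_theory] at hga
    have hvab : M.Sat (.imp a b) v := (mem_theory.1 (hv ▸ hfg h)).2
    exact (ihb g).2 (hv ▸ mem_theory.2 ⟨hb, hvab v (hM.le_refl v) hga.2⟩)

theorem cs4Model.sat_dia_iff (hM : M.IsCS4) (hψ : .dia a ∈ φ.subformulas)
    (iha : ∀ g, (M.cs4Model φ).Sat a g ↔ a ∈ g.1.1) (f : (M.cs4Model φ).W) :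
    (M.cs4Model φ).Sat (.dia a) f ↔ .dia a ∈ f.1.1 := by
  have ha := Fml.mem_subformulas_of_dia hψ
  constructor
  · intro h
    obtain ⟨⟨w, hw, -⟩, -⟩ := f.2
    refine hw ▸ mem_theory.2 ⟨hψ, fun u hwu => ?_⟩
    obtain ⟨k, hk, hka⟩ := h (M.cs4Point φ u) (cs4Model.le_cs4Point hM.1 hw hwu)
    exact (mem_witnessed.1 (hk.2.2 (cs4Model.theory_subset_promises hM.1 k ((iha k).1 hka)))).2
  · intro h g hfg
    obtain ⟨⟨u, hu, huX⟩, -⟩ := g.2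
    have hua : M.Sat (.dia a) u := (mem_theory.1 (hu ▸ hfg h)).2
    obtain ⟨x, hux, hx⟩ := hua u (hM.1.le_refl u)
    exact ⟨M.cs4Point φ x, cs4Model.sq_cs4Point hM hux hu huX, (iha _).2 (mem_theory.2 ⟨ha, hx⟩)⟩

theorem cs4Model.sat_box_iff (hM : M.IsCS4) (hψ : .box a ∈ φ.subformulas)
    (iha : ∀ g, (M.cs4Model φ).Sat a g ↔ a ∈ g.1.1) (f : (M.cs4Model φ).W) :
    (M.cs4Model φ).Sat (.box a) f ↔ .box a ∈ f.1.1 := by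
  have ha := Fml.mem_subformulas_of_box hψ
  constructor
  · intro h
    obtain ⟨⟨w, hw, -⟩, -⟩ := f.2
    refine hw ▸ mem_theory.2 ⟨hψ, fun u x hwu hux => ?_⟩
    have := h (M.cs4Point φ u) (M.cs4Point φ x) (cs4Model.le_cs4Point hM.1 hw hwu)
      (cs4Model.sq_cs4Point hM hux rfl subset_rfl)
    exact (mem_theory.1 ((iha _).1 this)).2
  · intro h g k hfg hgk
    obtain ⟨⟨x, hx, -⟩, -⟩ := k.2
    have hxa : M.Sat (.box a) x := (mem_theory.1 (hx ▸ hgk.1 a (hfg h))).2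
    exact (iha k).2 (hx ▸ mem_theory.2 ⟨ha, hxa x x (hM.1.le_refl x) (hM.1.sq_refl x)⟩)

end TruthLemma

theorem cs4Model_sat_iff (hM : M.IsCS4) {ψ : Fml} (hψ : ψ ∈ φ.subformulas)
    (f : (M.cs4Model φ).W) : (M.cs4Model φ).Sat ψ f ↔ ψ ∈ f.1.1 := by
  induction ψ generalizing f with
  | var p => exact ⟨fun h => h hψ, fun h _ => h⟩
  | bot => exact Iff.rfl
  | and a b iha ihb =>
    obtain ⟨ha, hb⟩ := Fml.mem_subformulas_of_and hψ
    obtain ⟨⟨w, hw, -⟩, -⟩ := f.2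
    simp only [Sat, iha ha, ihb hb, hw, mem_theory]
    tauto
  | or a b iha ihb =>
    obtain ⟨ha, hb⟩ := Fml.mem_subformulas_of_or hψ
    obtain ⟨⟨w, hw, -⟩, -⟩ := f.2
    simp only [Sat, iha ha, ihb hb, hw, mem_theory]
    tauto
  | imp a b iha ihb =>
    obtain ⟨ha, hb⟩ := Fml.mem_subformulas_of_imp hψ
    exact cs4Model.sat_imp_iff hM.1 hψ (iha ha) (ihb hb) f
  | dia a iha => exact cs4Model.sat_dia_iff hM hψ (iha (Fml.mem_subformulas_of_dia hψ)) f
  | box a iha => exact cs4Model.sat_box_iff hM hψ (iha (Fml.mem_subformulas_of_box hψ)) f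

theorem cs4Model_isCS4 (hM : M.IsCS4) : (M.cs4Model φ).IsCS4 := by
  refine ⟨⟨fun f => subset_rfl, fun f g h hfg hgh => hfg.trans hgh,
    fun f => ⟨fun _ h => h, id, subset_rfl⟩, ?_, fun f g hf hfg => hfg hf,
    fun f g hf hfg => hfg.2.1 hf, fun p f g hf hfg hp => hfg (hf hp), ?_⟩, ?_⟩
  · rintro f g h ⟨hfg₁, hfg₂, hfg₃⟩ ⟨hgh₁, hgh₂, hgh₃⟩
    exact ⟨fun a ha => hgh₁ a (hfg₁ a ha), fun hb => hgh₂ (hfg₂ hb), hgh₃.trans hfg₃⟩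
  · intro p f hf hp
    obtain ⟨⟨w, hw, -⟩, -⟩ := f.2
    have hwb : M.Sat .bot w := (mem_theory.1 (by rw [← hw]; exact hf)).2
    exact hw ▸ mem_theory.2 ⟨hp, hM.1.val_of_fallible p hwb⟩
  · rintro f g h ⟨hfg₁, hfg₂, hfg₃⟩ hgh
    obtain ⟨⟨w, hw, hwX⟩, hX⟩ := f.2
    refine ⟨⟨(f.1.1, f.1.2 ∪ h.1.2), ⟨w, hw, hwX.trans Finset.subset_union_left⟩,
      Finset.union_subset hX h.2.2⟩, subset_rfl,
      fun a ha => hgh (hfg₁ a ha), fun hb => hgh (hfg₂ hb), Finset.subset_union_right⟩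

theorem finite_cs4Model : Finite (M.cs4Model φ).W := by
  refine Set.Finite.to_subtype (s := {p | (∃ w, p.1 = M.theory φ w ∧
    M.witnessed φ w ⊆ p.2) ∧ p.2 ⊆ φ.subformulas}) ((φ.subformulas.powerset ×ˢ
    φ.subformulas.powerset).finite_toSet.subset ?_)
  rintro ⟨t, X⟩ ⟨⟨w, rfl, -⟩, hX⟩
  simpa using ⟨theory_subset φ w, hX⟩

variable (φ) in
theorem exists_finite_isCS4_sat_iff (hM : M.IsCS4) {w : M.W} (hw : w ∉ M.fallible) :
    ∃ (N : KModel.{0}) (v : N.W), N.IsCS4 ∧ Finite N.W ∧ v ∉ N.fallible ∧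
      (N.Sat φ v ↔ M.Sat φ w) :=
  ⟨M.cs4Model φ, M.cs4Point φ w, cs4Model_isCS4 hM, finite_cs4Model,
    fun hb => hw (mem_theory.1 hb).2,
    (cs4Model_sat_iff hM φ.mem_subformulas_self _).trans
      (mem_theory.trans (and_iff_right φ.mem_subformulas_self))⟩

end CS4

namespace IsS4I

variable (hM : M.IsS4I)
include hM

theorem sat_box_of_sq {a : Fml} {u v : M.W} (huv : M.sq u v) (hu : M.Sat (.box a) u) :
    M.Sat (.box a) v := by
  intro x y hvx hxy
  obtain ⟨x', hvx', hx'y⟩ := hM.2.2.1 v x y hvx hxy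
  exact (hu u x' (hM.1.le_refl u) (hM.1.sq_trans huv hvx')).mono hM.1 hx'y

theorem sat_dia_of_sq {a : Fml} {u v : M.W} (huv : M.sq u v) (hv : M.Sat (.dia a) v) :
    M.Sat (.dia a) u := by
  intro x hux
  obtain ⟨v', hvv', hxv'⟩ := hM.2.1 u x v hux huv
  obtain ⟨y, hv'y, hy⟩ := hv.mono hM.1 hvv' v' (hM.1.le_refl v')
  exact ⟨y, hM.1.sq_trans hxv' hv'y, hy⟩

end IsS4I

theorem Sat.dia_of_sat (hM : M.IsBiInt) {a : Fml} {w : M.W} (h : M.Sat a w) :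
    M.Sat (.dia a) w :=
  fun x hwx => ⟨x, hM.sq_refl x, h.mono hM hwx⟩

section Quotient

variable {T : Type} (t : M.W → T)

structure IsLeBisimMap : Prop where
  forth : ∀ {w w' v}, t w = t w' → M.le w v → ∃ v', M.le w' v' ∧ t v' = t v
  back : ∀ {u v v'}, t v = t v' → M.le u v → ∃ u', M.le u' v' ∧ t u' = t u

variable (M) in
/-- The image of `⊑` under `t` need not be transitive, hence the closure. -/
def quotientModel : KModel.{0} where
  W := Set.range t
  fallible := ∅
  le f g := Relation.Map M.le t t f g
  sq := Relation.TransGen fun f g => Relation.Map M.sq t t f g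
  val p := {f | f.1 ∈ t '' M.val p}

variable (M) in
def toQuotient (w : M.W) : (M.quotientModel t).W := ⟨t w, w, rfl⟩

variable {t}

theorem quotientModel.sq_toQuotient {u x : M.W} (hux : M.sq u x) :
    (M.quotientModel t).sq (M.toQuotient t u) (M.toQuotient t x) :=
  .single ⟨u, x, hux, rfl, rfl⟩

theorem IsLeBisimMap.forth_quotient (ht : M.IsLeBisimMap t) {f g : (M.quotientModel t).W}
    (hfg : (M.quotientModel t).le f g) {w : M.W} (hw : t w = f.1) :
    ∃ v, M.le w v ∧ t v = g.1 := by
  obtain ⟨w₀, v₀, hwv₀, hw₀, hv₀⟩ := hfg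
  obtain ⟨v, hwv, hv⟩ := ht.forth (hw₀.trans hw.symm) hwv₀
  exact ⟨v, hwv, hv.trans hv₀⟩

theorem IsLeBisimMap.back_quotient (ht : M.IsLeBisimMap t) {f g : (M.quotientModel t).W}
    (hfg : (M.quotientModel t).le f g) {v : M.W} (hv : t v = g.1) :
    ∃ u, M.le u v ∧ t u = f.1 := by
  obtain ⟨u₀, v₀, huv₀, hu₀, hv₀⟩ := hfg
  obtain ⟨u, huv, hu⟩ := ht.back (hv₀.trans hv.symm) huv₀
  exact ⟨u, huv, hu.trans hu₀⟩

theorem quotientModel.exists_of_sq {P : M.W → Prop} (hPt : ∀ {c c'}, t c = t c' → P c → P c')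
    (hP : ∀ {u x}, M.sq u x → P u → P x) {f g : (M.quotientModel t).W}
    (hfg : (M.quotientModel t).sq f g) (hf : ∃ c, t c = f.1 ∧ P c) : ∃ d, t d = g.1 ∧ P d := by
  induction hfg with
  | single hstep =>
    obtain ⟨u, x, hux, hu, hx⟩ := hstep
    obtain ⟨c, hc, hPc⟩ := hf
    exact ⟨x, hx, hP hux (hPt (hc.trans hu.symm) hPc)⟩
  | tail _ hstep ih =>
    obtain ⟨u, x, hux, hu, hx⟩ := hstep
    obtain ⟨c, hc, hPc⟩ := ih
    exact ⟨x, hx, hP hux (hPt (hc.trans hu.symm) hPc)⟩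

theorem quotientModel.exists_of_sq_rev {P : M.W → Prop} (hPt : ∀ {c c'}, t c = t c' → P c → P c')
    (hP : ∀ {u x}, M.sq u x → P x → P u) {f g : (M.quotientModel t).W}
    (hfg : (M.quotientModel t).sq f g) (hg : ∃ d, t d = g.1 ∧ P d) : ∃ c, t c = f.1 ∧ P c := by
  induction hfg with
  | single hstep =>
    obtain ⟨u, x, hux, hu, hx⟩ := hstep
    obtain ⟨d, hd, hPd⟩ := hg
    exact ⟨u, hu, hP hux (hPt (hd.trans hx.symm) hPd)⟩
  | tail _ hstep ih =>
    obtain ⟨u, x, hux, hu, hx⟩ := hstep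
    obtain ⟨d, hd, hPd⟩ := hg
    exact ih ⟨u, hu, hP hux (hPt (hd.trans hx.symm) hPd)⟩

theorem quotientModel_isBiInt (hM : M.IsBiInt) (ht : M.IsLeBisimMap t) :
    (M.quotientModel t).IsBiInt := by
  refine ⟨?_, ?_, ?_, fun _ _ _ => .trans, fun _ _ hf => (Set.notMem_empty _ hf).elim,
    fun _ _ hf => (Set.notMem_empty _ hf).elim, ?_, fun _ _ hf => (Set.notMem_empty _ hf).elim⟩
  · rintro ⟨_, w, rfl⟩
    exact ⟨w, w, hM.le_refl w, rfl, rfl⟩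
  · rintro f g h ⟨w, v, hwv, hw, hv⟩ hgh
    obtain ⟨m, hvm, hm⟩ := ht.forth_quotient hgh hv
    exact ⟨w, m, hM.le_trans hwv hvm, hw, hm⟩
  · rintro ⟨_, w, rfl⟩
    exact .single ⟨w, w, hM.sq_refl w, rfl, rfl⟩
  · rintro p f g ⟨w, hwp, hw⟩ hfg
    obtain ⟨v, hwv, hv⟩ := ht.forth_quotient hfg hw
    exact ⟨v, hM.val_of_le hwp hwv, hv⟩

theorem quotientModel_forthUp (hM : M.ForthUp) (ht : M.IsLeBisimMap t) :
    (M.quotientModel t).ForthUp := by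
  have step : ∀ {f g h : (M.quotientModel t).W}, (M.quotientModel t).le f g →
      Relation.Map M.sq t t f.1 h.1 →
      ∃ h', (M.quotientModel t).le h h' ∧ Relation.Map M.sq t t g.1 h'.1 := by
    rintro f g h hfg ⟨u, x, hux, hu, hx⟩
    obtain ⟨v, huv, hv⟩ := ht.forth_quotient hfg hu
    obtain ⟨x', hxx', hvx'⟩ := hM u v x huv hux
    exact ⟨M.toQuotient t x', ⟨x, x', hxx', hx, rfl⟩, ⟨v, x', hvx', hv, rfl⟩⟩
  intro f g h hfg hfh
  induction hfh with
  | single hstep => exact (step hfg hstep).imp fun _ h => ⟨h.1, .single h.2⟩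
  | tail _ hstep ih =>
    obtain ⟨m, hm, hgm⟩ := ih
    obtain ⟨h', hh', hmh'⟩ := step hm hstep
    exact ⟨h', hh', hgm.tail hmh'⟩

theorem quotientModel_forthDown (hM : M.ForthDown) (ht : M.IsLeBisimMap t) :
    (M.quotientModel t).ForthDown := by
  have step : ∀ {f g h : (M.quotientModel t).W}, (M.quotientModel t).le f g →
      Relation.Map M.sq t t g.1 h.1 →
      ∃ h', Relation.Map M.sq t t f.1 h'.1 ∧ (M.quotientModel t).le h' h := by
    rintro f g h hfg ⟨v, x, hvx, hv, hx⟩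
    obtain ⟨u, huv, hu⟩ := ht.back_quotient hfg hv
    obtain ⟨y, huy, hyx⟩ := hM u v x huv hvx
    exact ⟨M.toQuotient t y, ⟨u, y, huy, hu, rfl⟩, ⟨y, x, hyx, rfl, hx⟩⟩
  intro f g h hfg hgh
  induction hgh with
  | single hstep => exact (step hfg hstep).imp fun _ h => ⟨.single h.1, h.2⟩
  | tail _ hstep ih =>
    obtain ⟨m, hfm, hm⟩ := ih
    obtain ⟨h', hmh', hh'⟩ := step hm hstep
    exact ⟨h', hfm.tail hmh', hh'⟩

theorem quotientModel_isS4I (hM : M.IsS4I) (ht : M.IsLeBisimMap t) :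
    (M.quotientModel t).IsS4I :=
  ⟨quotientModel_isBiInt hM.1 ht, quotientModel_forthUp hM.2.1 ht,
    quotientModel_forthDown hM.2.2.1 ht, rfl⟩

section TruthLemma

variable {φ a b : Fml}

theorem quotientModel.sat_imp_iff (ht : M.IsLeBisimMap t)
    (iha : ∀ {g : (M.quotientModel t).W} {v}, t v = g.1 → ((M.quotientModel t).Sat a g ↔ M.Sat a v))
    (ihb : ∀ {g : (M.quotientModel t).W} {v}, t v = g.1 → ((M.quotientModel t).Sat b g ↔ M.Sat b v))
    {f : (M.quotientModel t).W} {w : M.W} (hw : t w = f.1) :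
    (M.quotientModel t).Sat (.imp a b) f ↔ M.Sat (.imp a b) w := by
  constructor
  · intro h v hwv hva
    have hfv : (M.quotientModel t).le f (M.toQuotient t v) := ⟨w, v, hwv, hw, rfl⟩
    exact (ihb rfl).1 (h _ hfv ((iha rfl).2 hva))
  · intro h g hfg hga
    obtain ⟨v, hwv, hv⟩ := ht.forth_quotient hfg hw
    exact (ihb hv).2 (h v hwv ((iha hv).1 hga))

theorem quotientModel.sat_dia_iff (hM : M.IsS4I) (ht : M.IsLeBisimMap t)
    (hφ : ∀ {w w'}, t w = t w' → M.theory φ w = M.theory φ w') (hψ : .dia a ∈ φ.subformulas)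
    (iha : ∀ {g : (M.quotientModel t).W} {v}, t v = g.1 → ((M.quotientModel t).Sat a g ↔ M.Sat a v))
    {f : (M.quotientModel t).W} {w : M.W} (hw : t w = f.1) :
    (M.quotientModel t).Sat (.dia a) f ↔ M.Sat (.dia a) w := by
  have transfer {c c' : M.W} (h : t c = t c') : M.Sat (.dia a) c → M.Sat (.dia a) c' :=
    Sat.of_theory_eq (hφ h) hψ
  constructor
  · intro h
    obtain ⟨g, hfg, hga⟩ := h f ⟨w, w, hM.1.le_refl w, hw, hw⟩
    obtain ⟨x, hx⟩ := g.2
    obtain ⟨c, hc, hca⟩ := quotientModel.exists_of_sq_rev transfer hM.sat_dia_of_sq hfg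
      ⟨x, hx, ((iha hx).1 hga).dia_of_sat hM.1⟩
    exact transfer (hc.trans hw.symm) hca
  · intro h g hfg
    obtain ⟨v, hwv, hv⟩ := ht.forth_quotient hfg hw
    obtain ⟨x, hvx, hx⟩ := h v hwv
    exact ⟨M.toQuotient t x, .single ⟨v, x, hvx, hv, rfl⟩, (iha rfl).2 hx⟩

theorem quotientModel.sat_box_iff (hM : M.IsS4I) (ht : M.IsLeBisimMap t)
    (hφ : ∀ {w w'}, t w = t w' → M.theory φ w = M.theory φ w') (hψ : .box a ∈ φ.subformulas)
    (iha : ∀ {g : (M.quotientModel t).W} {v}, t v = g.1 → ((M.quotientModel t).Sat a g ↔ M.Sat a v))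
    {f : (M.quotientModel t).W} {w : M.W} (hw : t w = f.1) :
    (M.quotientModel t).Sat (.box a) f ↔ M.Sat (.box a) w := by
  constructor
  · intro h u x hwu hux
    exact (iha rfl).1 (h _ _ ⟨w, u, hwu, hw, rfl⟩ (quotientModel.sq_toQuotient hux))
  · intro h g k hfg hgk
    obtain ⟨v, hwv, hv⟩ := ht.forth_quotient hfg hw
    obtain ⟨d, hd, hda⟩ := quotientModel.exists_of_sq (fun h => Sat.of_theory_eq (hφ h) hψ)
      hM.sat_box_of_sq hgk ⟨v, hv, h.mono hM.1 hwv⟩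
    exact (iha hd).2 (hda d d (hM.1.le_refl d) (hM.1.sq_refl d))

end TruthLemma

theorem quotientModel_sat_iff (hM : M.IsS4I) (ht : M.IsLeBisimMap t) {φ : Fml}
    (hφ : ∀ {w w'}, t w = t w' → M.theory φ w = M.theory φ w') {ψ : Fml}
    (hψ : ψ ∈ φ.subformulas) {f : (M.quotientModel t).W} {w : M.W} (hw : t w = f.1) :
    (M.quotientModel t).Sat ψ f ↔ M.Sat ψ w := by
  induction ψ generalizing f w with
  | var p =>
    exact ⟨fun ⟨w', hw', hw'f⟩ => Sat.of_theory_eq (hφ (hw'f.trans hw.symm)) hψ hw',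
      fun h => ⟨w, h, hw⟩⟩
  | bot =>
    have hinf : M.fallible = ∅ := hM.2.2.2
    exact iff_of_false (Set.notMem_empty f) (by simp [Sat, hinf])
  | and a b iha ihb =>
    obtain ⟨ha, hb⟩ := Fml.mem_subformulas_of_and hψ
    exact and_congr (iha ha hw) (ihb hb hw)
  | or a b iha ihb =>
    obtain ⟨ha, hb⟩ := Fml.mem_subformulas_of_or hψ
    exact or_congr (iha ha hw) (ihb hb hw)
  | imp a b iha ihb =>
    obtain ⟨ha, hb⟩ := Fml.mem_subformulas_of_imp hψ
    exact quotientModel.sat_imp_iff ht (iha ha) (ihb hb) hw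
  | dia a iha =>
    exact quotientModel.sat_dia_iff hM ht hφ hψ (iha (Fml.mem_subformulas_of_dia hψ)) hw
  | box a iha =>
    exact quotientModel.sat_box_iff hM ht hφ hψ (iha (Fml.mem_subformulas_of_box hψ)) hw

end Quotient

section Rank

variable {n : ℕ}

variable (M) in
def IsSltChain (c : ℕ → M.W) (m : ℕ) : Prop := ∀ i < m, M.Slt (c i) (c (i + 1))

variable (M) in
/-- Junk value `0` when the lengths of `≺`-chains ending at `w` are unbounded. -/
noncomputable def rank (w : M.W) : ℕ := sSup {m | ∃ c, M.IsSltChain c m ∧ c m = w}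

variable (hn : M.DepthLE n)
include hn

theorem bddAbove_rank (w : M.W) : BddAbove {m | ∃ c, M.IsSltChain c m ∧ c m = w} :=
  ⟨n, by rintro m ⟨c, hc, -⟩; exact hn m c hc⟩

theorem exists_isSltChain_rank (w : M.W) :
    ∃ c, M.IsSltChain c (M.rank w) ∧ c (M.rank w) = w :=
  Nat.sSup_mem (s := {m | ∃ c, M.IsSltChain c m ∧ c m = w})
    ⟨0, fun _ => w, fun _ hi => absurd hi (Nat.not_lt_zero _), rfl⟩ (bddAbove_rank hn w)

theorem le_rank {c : ℕ → M.W} {m : ℕ} (hc : M.IsSltChain c m) : m ≤ M.rank (c m) :=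
  le_csSup (bddAbove_rank hn _) ⟨c, hc, rfl⟩

theorem rank_le (w : M.W) : M.rank w ≤ n := by
  obtain ⟨c, hc, -⟩ := exists_isSltChain_rank hn w
  exact hn _ c hc

theorem rank_lt_rank {u v : M.W} (huv : M.Slt u v) : M.rank u < M.rank v := by
  obtain ⟨c, hc, hcu⟩ := exists_isSltChain_rank hn u
  have hc' : M.IsSltChain (Function.update c (M.rank u + 1) v) (M.rank u + 1) := by
    intro i hi
    rcases Nat.lt_succ_iff_lt_or_eq.1 hi with hi | rfl
    · rw [Function.update_of_ne (by omega), Function.update_of_ne (by omega)]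
      exact hc i hi
    · rwa [Function.update_of_ne (by omega), Function.update_self, hcu]
  simpa using le_rank hn hc'

variable (hM : M.IsBiInt)
include hM

theorem rank_mono {u v : M.W} (huv : M.le u v) : M.rank u ≤ M.rank v := by
  obtain ⟨c, hc, hcu⟩ := exists_isSltChain_rank hn u
  have hc' : M.IsSltChain (Function.update c (M.rank u) v) (M.rank u) := by
    intro i hi
    rw [Function.update_of_ne (by omega)]
    by_cases hi' : i + 1 = M.rank u
    · have hcu' := hc i hi
      rw [hi', hcu] at hcu'
      rw [hi', Function.update_self]
      exact ⟨hM.le_trans hcu'.1 huv, fun hvc => hcu'.2 (hM.le_trans huv hvc)⟩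
    · rw [Function.update_of_ne hi']
      exact hc i hi
  simpa using le_rank hn hc'

theorem rank_eq_of_le_of_le {u v : M.W} (huv : M.le u v) (hvu : M.le v u) :
    M.rank u = M.rank v :=
  le_antisymm (rank_mono hn hM huv) (rank_mono hn hM hvu)

omit hM in
theorem le_of_le_of_rank_eq {u v : M.W} (huv : M.le u v) (h : M.rank u = M.rank v) :
    M.le v u :=
  by_contra fun hvu => (rank_lt_rank hn ⟨huv, hvu⟩).ne h

theorem exists_le_rank_eq {v : M.W} {j : ℕ} (hj : j ≤ M.rank v) :
    ∃ z, M.le z v ∧ M.rank z = j := by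
  obtain ⟨d, hd⟩ := Nat.exists_eq_add_of_le hj
  induction d generalizing v with
  | zero => exact ⟨v, hM.le_refl v, by omega⟩
  | succ d ih =>
    obtain ⟨c, hc, hcv⟩ := exists_isSltChain_rank hn v
    have hlt : M.Slt (c (j + d)) v := by
      have := hc (j + d) (by omega)
      rwa [show j + d + 1 = M.rank v by omega, hcv] at this
    have hle : j + d ≤ M.rank (c (j + d)) := le_rank hn fun i hi => hc i (by omega)
    have := rank_lt_rank hn hlt
    obtain ⟨z, hz, hzj⟩ := ih (v := c (j + d)) (by omega) (by omega)
    exact ⟨z, hM.le_trans hz hlt.1, hzj⟩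

end Rank

def UpType : ℕ → Type
  | 0 => PUnit
  | k + 1 => Set (Finset Fml) × Set (UpType k)

section Types

variable (M) (φ : Fml) (n : ℕ)

def CovBy (w z : M.W) : Prop := M.le w z ∧ M.rank z = M.rank w + 1

def clusterTheories (w : M.W) : Set (Finset Fml) :=
  M.theory φ '' {z | M.le w z ∧ M.le z w}

/-- The `≼`-bisimulation type, to height `k`, of the cluster of `w`. -/
noncomputable def upType : (k : ℕ) → M.W → UpType k
  | 0, _ => PUnit.unit
  | k + 1, w => (M.clusterTheories φ w, upType k '' {z | M.CovBy w z})

/-- A cluster of rank `i` is typed to height `n - i + 1`, which reaches the top of a frame of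
depth `n`; so no stabilization argument for the types is needed. -/
noncomputable def ancestorTypes (w : M.W) (i : ℕ) : Set (UpType (n - i + 1)) :=
  M.upType φ (n - i + 1) '' {u | M.le u w ∧ M.rank u = i}

noncomputable def fullType (w : M.W) :
    Finset Fml × ℕ × ((i : Fin (n + 1)) → Set (UpType (n - i + 1))) :=
  (M.theory φ w, M.rank w, fun i => M.ancestorTypes φ n w i)

variable {M φ n}

theorem exists_theory_eq_of_upType_eq {k : ℕ} {u u' m : M.W}
    (h : M.upType φ (k + 1) u = M.upType φ (k + 1) u') (hum : M.le u m) (hmu : M.le m u) :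
    ∃ m', M.le u' m' ∧ M.le m' u' ∧ M.theory φ m' = M.theory φ m := by
  have hcl : M.clusterTheories φ u = M.clusterTheories φ u' := congrArg Prod.fst h
  have : M.theory φ m ∈ M.clusterTheories φ u' := hcl ▸ ⟨m, ⟨hum, hmu⟩, rfl⟩
  obtain ⟨m', ⟨hu'm', hm'u'⟩, hm'⟩ := this
  exact ⟨m', hu'm', hm'u', hm'⟩

theorem exists_covBy_upType_eq {k : ℕ} {u u' z : M.W}
    (h : M.upType φ (k + 1) u = M.upType φ (k + 1) u') (hz : M.CovBy u z) :
    ∃ z', M.CovBy u' z' ∧ M.upType φ k z' = M.upType φ k z := by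
  have hcov : M.upType φ k '' {z | M.CovBy u z} = M.upType φ k '' {z | M.CovBy u' z} :=
    congrArg Prod.snd h
  have : M.upType φ k z ∈ M.upType φ k '' {z | M.CovBy u' z} := hcov ▸ ⟨z, hz, rfl⟩
  obtain ⟨z', hz', hz'z⟩ := this
  exact ⟨z', hz', hz'z⟩

variable (M φ) in
theorem finite_range_upType : ∀ k, (Set.range (M.upType φ k)).Finite
  | 0 => (Set.finite_singleton PUnit.unit).subset (Set.range_subset_singleton.2 rfl)
  | k + 1 => by
    refine (φ.subformulas.powerset.finite_toSet.finite_subsets.prod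
      (finite_range_upType k).finite_subsets).subset ?_
    rintro _ ⟨w, rfl⟩
    refine ⟨show M.clusterTheories φ w ⊆ _ from ?_,
      show M.upType φ k '' _ ⊆ _ from Set.image_subset_range _ _⟩
    rintro _ ⟨z, -, rfl⟩
    simpa using theory_subset φ z

variable (hn : M.DepthLE n) (hM : M.IsBiInt)
include hn hM

theorem upType_eq_of_le_of_le {u w : M.W} (huw : M.le u w) (hwu : M.le w u) :
    ∀ k, M.upType φ k u = M.upType φ k w
  | 0 => rfl
  | k + 1 => by
    have hr := rank_eq_of_le_of_le hn hM huw hwu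
    have hcl : {z | M.le u z ∧ M.le z u} = {z | M.le w z ∧ M.le z w} := Set.ext fun z =>
      ⟨fun h => ⟨hM.le_trans hwu h.1, hM.le_trans h.2 huw⟩,
        fun h => ⟨hM.le_trans huw h.1, hM.le_trans h.2 hwu⟩⟩
    have hcov : {z | M.CovBy u z} = {z | M.CovBy w z} := Set.ext fun z =>
      ⟨fun h => ⟨hM.le_trans hwu h.1, hr ▸ h.2⟩, fun h => ⟨hM.le_trans huw h.1, hr ▸ h.2⟩⟩
    simp only [upType, clusterTheories, hcl, hcov]
    rfl

theorem ancestorTypes_eq_empty {w : M.W} {i : ℕ} (h : M.rank w < i) :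
    M.ancestorTypes φ n w i = ∅ := by
  refine Set.image_eq_empty.2 (Set.eq_empty_of_forall_notMem fun u hu => ?_)
  have := rank_mono hn hM hu.1
  have := hu.2
  omega

theorem ancestorTypes_of_rank_eq {w : M.W} {i : ℕ} (h : M.rank w = i) :
    M.ancestorTypes φ n w i = {M.upType φ (n - i + 1) w} := by
  ext a
  constructor
  · rintro ⟨u, ⟨huw, hu⟩, rfl⟩
    exact upType_eq_of_le_of_le hn hM huw (le_of_le_of_rank_eq hn huw (hu.trans h.symm)) _
  · rintro rfl
    exact ⟨w, ⟨hM.le_refl w, h⟩, rfl⟩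

theorem ancestorTypes_eq_of_le (hF : M.ForestLike) {u v : M.W} (huv : M.le u v) {i : ℕ}
    (hi : i ≤ M.rank u) : M.ancestorTypes φ n u i = M.ancestorTypes φ n v i := by
  refine congrArg (M.upType φ _ '' ·) (Set.ext fun z => ⟨fun hz => ⟨hM.le_trans hz.1 huv, hz.2⟩,
    fun hz => ⟨(hF v z u hz.1 huv).elim id fun huz => ?_, hz.2⟩⟩)
  have := rank_mono hn hM huz
  have := hz.2
  exact le_of_le_of_rank_eq hn huz (by omega)

theorem fullType_eq_iff {u v : M.W} :
    M.fullType φ n u = M.fullType φ n v ↔ M.theory φ u = M.theory φ v ∧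
      M.rank u = M.rank v ∧ ∀ i ≤ M.rank u, M.ancestorTypes φ n u i = M.ancestorTypes φ n v i := by
  simp only [fullType, Prod.mk.injEq, funext_iff]
  refine and_congr_right fun _ => ⟨fun ⟨hr, h⟩ => ⟨hr, fun i hi => ?_⟩, fun ⟨hr, h⟩ => ⟨hr, ?_⟩⟩
  · have := rank_le hn u
    exact h ⟨i, by omega⟩
  · intro i
    by_cases hi : (i : ℕ) ≤ M.rank u
    · exact h i hi
    · rw [ancestorTypes_eq_empty hn hM (by omega), ancestorTypes_eq_empty hn hM (by omega)]

theorem upType_eq_of_fullType_eq {u v : M.W} (h : M.fullType φ n u = M.fullType φ n v) :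
    M.upType φ (n - M.rank u + 1) u = M.upType φ (n - M.rank u + 1) v := by
  obtain ⟨-, hr, ha⟩ := (fullType_eq_iff hn hM).1 h
  have := ha _ le_rfl
  rwa [ancestorTypes_of_rank_eq hn hM rfl, ancestorTypes_of_rank_eq hn hM hr.symm,
    Set.singleton_eq_singleton_iff] at this

variable (hF : M.ForestLike)
include hF

/-- `u₂` is the member of the cluster of `u₁` realizing the theory of `u`. -/
theorem exists_fullType_eq_of_upType_eq {u₁ u : M.W} (hr : M.rank u₁ = M.rank u)
    (hup : M.upType φ (n - M.rank u + 1) u₁ = M.upType φ (n - M.rank u + 1) u)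
    (hanc : ∀ i < M.rank u, M.ancestorTypes φ n u₁ i = M.ancestorTypes φ n u i) :
    ∃ u₂, M.le u₁ u₂ ∧ M.le u₂ u₁ ∧ M.fullType φ n u₂ = M.fullType φ n u := by
  obtain ⟨u₂, hu₁u₂, hu₂u₁, hth⟩ :=
    exists_theory_eq_of_upType_eq hup.symm (hM.le_refl u) (hM.le_refl u)
  have hr₂ : M.rank u₂ = M.rank u := (rank_eq_of_le_of_le hn hM hu₂u₁ hu₁u₂).trans hr
  refine ⟨u₂, hu₁u₂, hu₂u₁, (fullType_eq_iff hn hM).2 ⟨hth, hr₂, fun i hi => ?_⟩⟩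
  rcases hi.lt_or_eq with hi | rfl
  · rw [ancestorTypes_eq_of_le hn hM hF hu₂u₁ hi.le, hanc i (hr₂ ▸ hi)]
  · rw [ancestorTypes_of_rank_eq hn hM rfl, ancestorTypes_of_rank_eq hn hM hr₂.symm,
      Set.singleton_eq_singleton_iff, upType_eq_of_le_of_le hn hM hu₂u₁ hu₁u₂, hr₂, hup]

theorem fullType_back {u v v' : M.W} (h : M.fullType φ n v = M.fullType φ n v')
    (huv : M.le u v) : ∃ u', M.le u' v' ∧ M.fullType φ n u' = M.fullType φ n u := by
  obtain ⟨-, hr, ha⟩ := (fullType_eq_iff hn hM).1 h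
  have hru := rank_mono hn hM huv
  have : M.upType φ _ u ∈ M.ancestorTypes φ n v' (M.rank u) := ha _ hru ▸ ⟨u, ⟨huv, rfl⟩, rfl⟩
  obtain ⟨u₁, ⟨hu₁v', hu₁⟩, hup⟩ := this
  obtain ⟨u₂, -, hu₂u₁, hu₂⟩ := exists_fullType_eq_of_upType_eq hn hM hF hu₁ hup fun i hi => by
    rw [ancestorTypes_eq_of_le hn hM hF hu₁v' (by omega), ← ha i (by omega),
      ancestorTypes_eq_of_le hn hM hF huv hi.le]
  exact ⟨u₂, hM.le_trans hu₂u₁ hu₁v', hu₂⟩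

theorem exists_covBy_fullType_eq {w w' z : M.W} (h : M.fullType φ n w = M.fullType φ n w')
    (hz : M.CovBy w z) : ∃ z', M.le w' z' ∧ M.fullType φ n z' = M.fullType φ n z := by
  obtain ⟨-, hr, ha⟩ := (fullType_eq_iff hn hM).1 h
  have := rank_le hn z
  obtain ⟨z₁, hz₁, hup⟩ := exists_covBy_upType_eq (upType_eq_of_fullType_eq hn hM h) hz
  have := hz.2
  have := hz₁.2
  rw [show n - M.rank w = n - M.rank z + 1 by omega] at hup
  obtain ⟨z₂, hz₁z₂, -, hz₂⟩ := exists_fullType_eq_of_upType_eq hn hM hF (by omega) hup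
    fun i hi => by
      rw [← ancestorTypes_eq_of_le hn hM hF hz₁.1 (by omega), ← ha i (by omega),
        ancestorTypes_eq_of_le hn hM hF hz.1 (by omega)]
  exact ⟨z₂, hM.le_trans hz₁.1 hz₁z₂, hz₂⟩

theorem fullType_forth {w w' v : M.W} (h : M.fullType φ n w = M.fullType φ n w')
    (hwv : M.le w v) : ∃ v', M.le w' v' ∧ M.fullType φ n v' = M.fullType φ n v := by
  obtain ⟨d, hd⟩ := Nat.exists_eq_add_of_le (rank_mono hn hM hwv)
  induction d generalizing w w' with
  | zero =>
    have hvw := le_of_le_of_rank_eq hn hwv (by omega)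
    obtain ⟨-, hr, ha⟩ := (fullType_eq_iff hn hM).1 h
    have hup : M.upType φ (n - M.rank v + 1) w' = M.upType φ (n - M.rank v + 1) v := by
      rw [upType_eq_of_le_of_le hn hM hvw hwv, show M.rank v = M.rank w by omega]
      exact (upType_eq_of_fullType_eq hn hM h).symm
    obtain ⟨v', hw'v', -, hv'⟩ := exists_fullType_eq_of_upType_eq hn hM hF (by omega) hup
      fun i hi => by rw [← ha i (by omega), ancestorTypes_eq_of_le hn hM hF hwv (by omega)]
    exact ⟨v', hw'v', hv'⟩
  | succ d ih =>
    obtain ⟨z, hzv, hz⟩ := exists_le_rank_eq hn hM (show M.rank w + 1 ≤ M.rank v by omega)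
    have hwz : M.le w z := (hF v w z hwv hzv).elim id fun hzw => by
      have := rank_mono hn hM hzw
      omega
    obtain ⟨z', hw'z', hz'⟩ := exists_covBy_fullType_eq hn hM hF h ⟨hwz, hz⟩
    obtain ⟨v', hz'v', hv'⟩ := ih hz'.symm hzv (by omega)
    exact ⟨v', hM.le_trans hw'z' hz'v', hv'⟩

end Types

variable {n : ℕ}

theorem finite_range_fullType (φ : Fml) (hn : M.DepthLE n) :
    (Set.range (M.fullType φ n)).Finite := by
  refine (φ.subformulas.powerset.finite_toSet.prod ((Set.finite_Iic n).prod
    (Set.Finite.pi fun i => (M.finite_range_upType φ _).finite_subsets))).subset ?_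
  rintro _ ⟨w, rfl⟩
  exact ⟨show M.theory φ w ∈ _ by simpa using theory_subset φ w, rank_le hn w,
    fun i _ => show M.upType φ _ '' _ ⊆ _ from Set.image_subset_range _ _⟩

theorem exists_finite_isS4I_sat_iff (φ : Fml) (hM : M.IsS4I) (hn : M.DepthLE n)
    (hF : M.ForestLike) (w : M.W) :
    ∃ (N : KModel.{0}) (v : N.W), N.IsS4I ∧ Finite N.W ∧ v ∉ N.fallible ∧
      (N.Sat φ v ↔ M.Sat φ w) := by
  have ht : M.IsLeBisimMap (M.fullType φ n) :=
    ⟨fullType_forth hn hM.1 hF, fullType_back hn hM.1 hF⟩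
  exact ⟨M.quotientModel (M.fullType φ n), M.toQuotient _ w, quotientModel_isS4I hM ht,
    (finite_range_fullType φ hn).to_subtype, Set.notMem_empty _,
    quotientModel_sat_iff hM ht (congrArg Prod.fst) φ.mem_subformulas_self rfl⟩

end KModel

/-- **From shallow frames to finite frames.** (1) If an `L`-formula `φ` is
falsifiable (respectively, satisfiable) on a shallow CS4 frame, then `φ` is
falsifiable (respectively, satisfiable) on a finite CS4 frame. (2) If `φ` is
falsifiable (respectively, satisfiable) on a shallow, forest-like S4I frame,
then `φ` is falsifiable (respectively, satisfiable) on a finite S4I frame. -/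
theorem shallow_to_finite (φ : Fml) :
    ((∃ (M : KModel.{u}) (w : M.W), M.IsCS4 ∧ M.Shallow ∧
        w ∉ M.fallible ∧ ¬ M.Sat φ w) →
      ∃ (N : KModel.{0}) (v : N.W), N.IsCS4 ∧ Finite N.W ∧
        v ∉ N.fallible ∧ ¬ N.Sat φ v) ∧
    ((∃ (M : KModel.{u}) (w : M.W), M.IsCS4 ∧ M.Shallow ∧
        w ∉ M.fallible ∧ M.Sat φ w) →
      ∃ (N : KModel.{0}) (v : N.W), N.IsCS4 ∧ Finite N.W ∧
        v ∉ N.fallible ∧ N.Sat φ v) ∧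
    ((∃ (M : KModel.{u}) (w : M.W), M.IsS4I ∧ M.Shallow ∧ M.ForestLike ∧
        w ∉ M.fallible ∧ ¬ M.Sat φ w) →
      ∃ (N : KModel.{0}) (v : N.W), N.IsS4I ∧ Finite N.W ∧
        v ∉ N.fallible ∧ ¬ N.Sat φ v) ∧
    ((∃ (M : KModel.{u}) (w : M.W), M.IsS4I ∧ M.Shallow ∧ M.ForestLike ∧
        w ∉ M.fallible ∧ M.Sat φ w) →
      ∃ (N : KModel.{0}) (v : N.W), N.IsS4I ∧ Finite N.W ∧
        v ∉ N.fallible ∧ N.Sat φ v) := by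
  refine ⟨?_, ?_, ?_, ?_⟩
  · rintro ⟨M, w, hM, -, hw, hφ⟩
    obtain ⟨N, v, hN, hfin, hv, hiff⟩ := KModel.exists_finite_isCS4_sat_iff φ hM hw
    exact ⟨N, v, hN, hfin, hv, mt hiff.1 hφ⟩
  · rintro ⟨M, w, hM, -, hw, hφ⟩
    obtain ⟨N, v, hN, hfin, hv, hiff⟩ := KModel.exists_finite_isCS4_sat_iff φ hM hw
    exact ⟨N, v, hN, hfin, hv, hiff.2 hφ⟩
  · rintro ⟨M, w, hM, ⟨n, hn⟩, hF, -, hφ⟩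
    obtain ⟨N, v, hN, hfin, hv, hiff⟩ := KModel.exists_finite_isS4I_sat_iff φ hM hn hF w
    exact ⟨N, v, hN, hfin, hv, mt hiff.1 hφ⟩
  · rintro ⟨M, w, hM, ⟨n, hn⟩, hF, -, hφ⟩
    obtain ⟨N, v, hN, hfin, hv, hiff⟩ := KModel.exists_finite_isS4I_sat_iff φ hM hn hF w
    exact ⟨N, v, hN, hfin, hv, hiff.2 hφ⟩
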